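/- arXiv:1201.2131 — 4 statements merged into one kernel-verified Lean document; each statement's English description precedes it below -/
import Mathlib

section
/- Let p be a prime integer and h(t) = c₀ + c₁t + ⋯ + c_{k−1}t^{k−1} + c_k p^r t^k ∈ ℤ[t] be irreducible over ℤ, where gcd(c_k, p) = 1 and c_k ≠ ±1 and r ≥ 0. Let b ∈ ℂ be any root of h. Then there exists a valuation ν on the number field ℚ(b) with ν(p) = 0 and ν(b) < 0. -/
open Polynomial IntermediateField

lemma aux_toAdd {K : Type} [Field K] (V : ValuationSubring K) (x y : K)
    (hx : V.valuation x = 1) (hy : 1 < V.valuation y) :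
    ∃ (Λ : Type) (_ : LinearOrderedAddCommGroupWithTop Λ)
      (ν : AddValuation K Λ), ν x = 0 ∧ ν y < 0 := by
  exact ⟨Additive (V.ValueGroup)ᵒᵈ, inferInstance, V.valuation, hx, hy⟩


lemma core {K : Type} [Field K] [Algebra ℚ K] (h : ℤ[X]) (hirr : Irreducible h)
    (hprim : h.IsPrimitive) (k : ℕ) (hk : 0 < k) (hdeg : h.natDegree = k)
    (q : ℤ) (hq : Prime q) (hqk : q ∣ h.coeff k) (i : ℕ) (hik : i < k)
    (hqi : ¬ q ∣ h.coeff i) (g : K) (hg : aeval g h = 0) (P S : ℤ[X])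
    (heq : g⁻¹ * aeval g⁻¹ P + (q : K) * aeval g⁻¹ S = 1) : False := by
  have hKchar : CharZero K := charZero_of_injective_algebraMap (algebraMap ℚ K).injective
  have hne : h ≠ 0 := fun e => by simp [e] at hdeg; omega
  set u : K := g⁻¹ with hu_def
  set F : ℤ[X] := X * P + C q * S - 1 with hF_def
  have hF0 : F.coeff 0 = q * S.coeff 0 - 1 := by
    simp [hF_def, coeff_sub, coeff_add, mul_coeff_zero]
  have hqF0 : ¬ q ∣ F.coeff 0 := by
    rw [hF0]
    intro hd
    have : q ∣ 1 := (dvd_sub_right ⟨S.coeff 0, rfl⟩).mp hd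
    exact hq.not_unit (isUnit_of_dvd_one this)
  have hF0ne : F.coeff 0 ≠ 0 := fun e => hqF0 (e ▸ dvd_zero q)
  have hFu : aeval u F = 0 := by
    simp only [hF_def, map_sub, map_add, map_mul, map_one, aeval_X, aeval_C]
    rw [show (algebraMap ℤ K) q = (q : K) by simp]
    rw [heq]; ring
  have hu0 : u ≠ 0 := by
    intro e
    rw [e, show aeval (0:K) F = algebraMap ℤ K (F.coeff 0) from eval₂_at_zero _] at hFu
    rw [show (algebraMap ℤ K) (F.coeff 0) = ((F.coeff 0 : ℤ) : K) by simp] at hFu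
    exact hF0ne (by exact_mod_cast hFu)
  have hg0 : g ≠ 0 := fun e => hu0 (by simp [hu_def, e])
  have hFne : F ≠ 0 := fun e => hF0ne (by simp [e])
  set G : ℤ[X] := F.reverse with hG_def
  have hGne : G ≠ 0 := fun e => hFne (reverse_eq_zero.mp e)
  have hGlc : G.leadingCoeff = F.coeff 0 := by
    rw [hG_def, reverse_leadingCoeff, trailingCoeff,
      natTrailingDegree_eq_zero.mpr (Or.inr hF0ne)]
  have hGg : aeval g G = 0 := by
    have : Invertible u := invertibleOfNonzero hu0
    have h2 := (eval₂_reverse_eq_zero_iff (algebraMap ℤ K) u F).mpr hFu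
    rwa [invOf_eq_inv, hu_def, inv_inv, ← aeval_def] at h2
  -- h divides G over ℤ
  have hmapne : h.map (algebraMap ℤ ℚ) ≠ 0 :=
    fun e => hne (Polynomial.map_injective _ (algebraMap ℤ ℚ).injective_int (by simpa using e))
  have hirrQ : Irreducible (h.map (algebraMap ℤ ℚ)) :=
    (hprim.irreducible_iff_irreducible_map_fraction_map (K := ℚ)).mp hirr
  have haevalQ : ∀ f : ℤ[X], aeval g (f.map (algebraMap ℤ ℚ)) = aeval g f := fun f => by
    rw [aeval_map_algebraMap]
  have hintg : IsIntegral ℚ g :=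
    (isAlgebraic_iff_isIntegral).mp ⟨h.map (algebraMap ℤ ℚ), hmapne, by rw [haevalQ]; exact hg⟩
  have hmind : minpoly ℚ g ∣ h.map (algebraMap ℤ ℚ) :=
    minpoly.dvd ℚ g (by rw [haevalQ]; exact hg)
  obtain ⟨t, ht⟩ := hmind
  have htu : IsUnit t := by
    rcases hirrQ.isUnit_or_isUnit ht with h1 | h1
    · exact absurd h1 (minpoly.not_isUnit ℚ g)
    · exact h1
  have hassoc : Associated (minpoly ℚ g) (h.map (algebraMap ℤ ℚ)) := ⟨htu.unit, ht.symm⟩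
  have hdvdQ : h.map (algebraMap ℤ ℚ) ∣ G.map (algebraMap ℤ ℚ) := by
    rw [← hassoc.dvd_iff_dvd_left]
    exact minpoly.dvd ℚ g (by rw [haevalQ]; exact hGg)
  -- reduce to primitive part
  have hcontne : (G.content : ℚ) ≠ 0 := fun e => hGne (content_eq_zero_iff.mp (by exact_mod_cast e))
  have hdvdQ' : h.map (algebraMap ℤ ℚ) ∣ G.primPart.map (algebraMap ℤ ℚ) := by
    have e1 : G.map (algebraMap ℤ ℚ) =
        C (G.content : ℚ) * G.primPart.map (algebraMap ℤ ℚ) := by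
      conv_lhs => rw [G.eq_C_content_mul_primPart]
      rw [Polynomial.map_mul, map_C]
      rfl
    rcases hdvdQ with ⟨w, hw⟩
    exact ⟨C (G.content : ℚ)⁻¹ * w, by
      rw [← mul_assoc, mul_comm (h.map _), mul_assoc, ← hw, e1, ← mul_assoc, ← C_mul,
        inv_mul_cancel₀ hcontne, C_1, one_mul]⟩
  have hdvd : h ∣ G :=
    dvd_trans (hprim.dvd_of_fraction_map_dvd_fraction_map (K := ℚ)
      hdvdQ') G.primPart_dvd
  obtain ⟨W, hW⟩ := hdvd
  have hWne : W ≠ 0 := fun e => hGne (by rw [hW, e, mul_zero])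
  -- reduction mod q
  set n : ℕ := q.natAbs with hn_def
  have hnp : Fact (n.Prime) := ⟨Int.prime_iff_natAbs_prime.mp hq⟩
  set ψ : ℤ →+* ZMod n := Int.castRingHom (ZMod n) with hψ_def
  have hψ0 : ∀ m : ℤ, ψ m = 0 ↔ q ∣ m := fun m => by
    rw [hψ_def, Int.coe_castRingHom, ZMod.intCast_zmod_eq_zero_iff_dvd, hn_def,
      Int.natAbs_dvd]
  have hhbar_ne : h.map ψ ≠ 0 := fun e => by
    have := congrArg (fun f => Polynomial.coeff f i) e
    simp only [coeff_map, coeff_zero] at this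
    exact hqi ((hψ0 _).mp this)
  have hhbar_deg : (h.map ψ).natDegree < k := by
    rcases lt_or_eq_of_le (natDegree_map_le (f := ψ) (p := h)) with h1 | h1
    · omega
    · exfalso
      apply hhbar_ne
      rw [← leadingCoeff_eq_zero, leadingCoeff, h1, hdeg, coeff_map]
      exact (hψ0 _).mpr hqk
  have hGbar_deg : (G.map ψ).natDegree = G.natDegree :=
    natDegree_map_of_leadingCoeff_ne_zero ψ (fun e => hqF0 ((hψ0 _).mp (hGlc ▸ e)))
  have hGdeg : G.natDegree = k + W.natDegree := by
    rw [hW, natDegree_mul hne hWne, hdeg]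
  have : (G.map ψ).natDegree < G.natDegree := by
    calc (G.map ψ).natDegree = ((h.map ψ) * (W.map ψ)).natDegree := by
          rw [hW, Polynomial.map_mul]
      _ ≤ (h.map ψ).natDegree + (W.map ψ).natDegree := natDegree_mul_le
      _ < k + W.natDegree :=
          Nat.add_lt_add_of_lt_of_le hhbar_deg (natDegree_map_le)
      _ = G.natDegree := hGdeg.symm
  omega

set_option maxHeartbeats 2000000 in
set_option synthInstance.maxHeartbeats 400000 in
/-- If `p` is a prime and `h(t) = c₀ + c₁ t + ⋯ + c_{k-1} t^{k-1} + c_k p^r t^k ∈ ℤ[t]`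
is irreducible over `ℤ`, with `gcd(c_k, p) = 1` and `c_k ≠ ±1`, and `b ∈ ℂ` is a root
of `h`, then there is a valuation `ν` on `ℚ(b)` with `ν p = 0` and `ν b < 0`. -/
theorem stmt2 (p : ℕ) (hp : p.Prime) (k r : ℕ) (hk : 0 < k) (c : ℕ → ℤ)
    (h : Polynomial ℤ)
    (hh : h = (∑ i ∈ Finset.range k, C (c i) * X ^ i) + C (c k * (p : ℤ) ^ r) * X ^ k)
    (hirr : Irreducible h)
    (hcop : IsCoprime (c k) (p : ℤ))
    (hck : c k ≠ 1 ∧ c k ≠ -1)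
    (b : ℂ) (hb : Polynomial.aeval b h = 0) :
    ∃ (Λ : Type) (_ : LinearOrderedAddCommGroupWithTop Λ)
      (ν : AddValuation ℚ⟮b⟯ Λ),
      ν ((p : ℚ⟮b⟯)) = 0 ∧ ν (IntermediateField.AdjoinSimple.gen ℚ b) < 0 := by
  have hpz : (p : ℤ) ≠ 0 := Int.natCast_ne_zero.mpr hp.ne_zero
  have hck0 : c k ≠ 0 := by
    rintro h0
    rw [h0, isCoprime_zero_left, Int.isUnit_iff] at hcop
    rcases hcop with e | e <;> [skip; omega]
    exact hp.one_lt.ne' (by exact_mod_cast e)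
  have hlc : c k * (p : ℤ) ^ r ≠ 0 := mul_ne_zero hck0 (pow_ne_zero _ hpz)
  have hc : ∀ n, h.coeff n =
      (if n < k then c n else 0) + (if n = k then c k * (p : ℤ) ^ r else 0) := by
    intro n
    rw [hh]
    simp only [coeff_add, finset_sum_coeff, coeff_C_mul, coeff_X_pow, mul_ite, mul_one,
      mul_zero]
    congr 1
    · rw [Finset.sum_ite_eq (Finset.range k) n c]
      simp [Finset.mem_range]
  have hdeg : h.natDegree = k := by
    apply le_antisymm
    · rw [natDegree_le_iff_coeff_eq_zero]
      intro N hN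
      rw [hc N, if_neg (by omega), if_neg (by omega), add_zero]
    · apply le_natDegree_of_ne_zero
      rw [hc k, if_neg (by omega), if_pos rfl, zero_add]
      exact hlc
  have hne : h ≠ 0 := fun e => by simp [e] at hdeg; omega
  obtain ⟨q, hq, hqck⟩ := Int.exists_prime_and_dvd (n := c k)
    (by rw [Ne, Int.natAbs_eq_iff]; push_neg; exact ⟨hck.1, hck.2⟩)
  have hqp : ¬ (q ∣ (p : ℤ)) := by
    intro hd
    obtain ⟨a, b', hab⟩ := hcop
    exact hq.not_unit (isUnit_of_dvd_one (hab ▸ dvd_add (Dvd.dvd.mul_left hqck a)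
      (Dvd.dvd.mul_left hd b')))
  have hprim : h.IsPrimitive := by
    intro s hs
    obtain ⟨w, hw⟩ := hs
    rcases hirr.isUnit_or_isUnit hw with h1 | h2
    · exact isUnit_C.mp h1
    · exfalso
      have hw0 : w ≠ 0 := fun e => hne (by rw [hw, e, mul_zero])
      have hs0 : C s ≠ 0 := fun e => hne (by rw [hw, e, zero_mul])
      have : h.natDegree = 0 := by
        rw [hw, natDegree_mul hs0 hw0, natDegree_C, natDegree_eq_zero_of_isUnit h2]
      omega
  have hCq : ¬ C q ∣ h := fun hd => hq.not_unit (hprim q hd)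
  rw [C_dvd_iff_dvd_coeff] at hCq
  push_neg at hCq
  obtain ⟨i, hi⟩ := hCq
  have hik : i < k := by
    rcases lt_trichotomy i k with h1 | h1 | h1
    · exact h1
    · exfalso; apply hi; rw [h1, hc k, if_neg (by omega), if_pos rfl, zero_add]
      exact Dvd.dvd.mul_right hqck _
    · exfalso; apply hi; rw [hc i, if_neg (by omega), if_neg (by omega)]; simp
  have hqk' : q ∣ h.coeff k := by
    rw [hc k, if_neg (by omega), if_pos rfl, zero_add]
    exact Dvd.dvd.mul_right hqck _
  -- b is nonzero
  have hb0 : b ≠ 0 := by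
    intro e
    have hc0 : h.coeff 0 = 0 := by
      rw [e, aeval_def, eval₂_at_zero] at hb
      rwa [show (algebraMap ℤ ℂ) (h.coeff 0) = ((h.coeff 0 : ℤ) : ℂ) by simp,
        Int.cast_eq_zero] at hb
    obtain ⟨w, hw⟩ := X_dvd_iff.mpr hc0
    rcases hirr.isUnit_or_isUnit hw with h1 | h1
    · exact Polynomial.not_isUnit_X h1
    · obtain ⟨a, ha, haw⟩ := Polynomial.isUnit_iff.mp h1
      have hlca : h.leadingCoeff = a := by
        rw [hw, ← haw, leadingCoeff_mul, leadingCoeff_X, one_mul, leadingCoeff_C]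
      have : q ∣ a := by
        rw [← hlca, leadingCoeff, hdeg]
        exact hqk'
      exact hq.not_unit (isUnit_of_dvd_unit this ha)
  -- the generator of ℚ(b)
  have hgb : (algebraMap ℚ⟮b⟯ ℂ) (IntermediateField.AdjoinSimple.gen ℚ b) = b :=
    IntermediateField.AdjoinSimple.algebraMap_gen ℚ b
  have hgh : aeval (IntermediateField.AdjoinSimple.gen ℚ b) h = 0 := by
    apply (algebraMap ℚ⟮b⟯ ℂ).injective
    rw [map_zero, aeval_def, hom_eval₂,
      show (algebraMap ℚ⟮b⟯ ℂ).comp (algebraMap ℤ ℚ⟮b⟯) = algebraMap ℤ ℂ from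
        RingHom.ext_int _ _, hgb, ← aeval_def]
    exact hb
  have hg0 : IntermediateField.AdjoinSimple.gen ℚ b ≠ 0 := by
    intro e
    exact hb0 (by rw [← hgb, e, map_zero])
  set g : ℚ⟮b⟯ := IntermediateField.AdjoinSimple.gen ℚ b with hg_def
  set u : ℚ⟮b⟯ := g⁻¹ with hu_def
  have hu0 : u ≠ 0 := inv_ne_zero hg0
  set A : Subring ℚ⟮b⟯ := (Algebra.adjoin ℤ {u}).toSubring with hA_def
  have huA : u ∈ A := Algebra.self_mem_adjoin_singleton ℤ u
  have hqA : ((q : ℤ) : ℚ⟮b⟯) ∈ A := intCast_mem A q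
  have hpA : ((p : ℕ) : ℚ⟮b⟯) ∈ A := natCast_mem A p
  set uS : A := ⟨u, huA⟩ with huS_def
  set qS : A := ⟨((q : ℤ) : ℚ⟮b⟯), hqA⟩ with hqS_def
  set pS : A := ⟨((p : ℕ) : ℚ⟮b⟯), hpA⟩ with hpS_def
  -- the ideal (u, q) is proper
  have hItop : Ideal.span {uS, qS} ≠ ⊤ := by
    intro htop
    rw [Ideal.eq_top_iff_one, Ideal.mem_span_pair] at htop
    obtain ⟨a, s, has⟩ := htop
    have haA : (a : ℚ⟮b⟯) ∈ (Polynomial.aeval (R := ℤ) u).range := by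
      rw [← Algebra.adjoin_singleton_eq_range_aeval]
      exact Subalgebra.mem_toSubring.mp a.2
    have hsA : (s : ℚ⟮b⟯) ∈ (Polynomial.aeval (R := ℤ) u).range := by
      rw [← Algebra.adjoin_singleton_eq_range_aeval]
      exact Subalgebra.mem_toSubring.mp s.2
    obtain ⟨P, hP⟩ := haA
    obtain ⟨S, hS⟩ := hsA
    have hP' : aeval u P = (a : ℚ⟮b⟯) := hP
    have hS' : aeval u S = (s : ℚ⟮b⟯) := hS
    have heq : u * aeval u P + ((q : ℤ) : ℚ⟮b⟯) * aeval u S = 1 := by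
      have hval := congrArg Subtype.val has
      push_cast [huS_def, hqS_def] at hval
      rw [hP', hS', ← hval]
      ring
    exact core h hirr hprim k hk hdeg q hq hqk' i hik hi g hgh P S heq
  obtain ⟨M, hMmax, hMle⟩ := Ideal.exists_le_maximal _ hItop
  haveI := hMmax.isPrime
  have huM : uS ∈ M := hMle (Ideal.subset_span (by simp))
  have hqM : qS ∈ M := hMle (Ideal.subset_span (by simp))
  -- p is not in M
  have hpM : pS ∉ M := by
    intro hmem
    have hqe : algebraMap ℤ A q = qS := by
      apply Subtype.ext
      push_cast [hqS_def]
      rfl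
    have hpe : algebraMap ℤ A ((p : ℕ) : ℤ) = pS := by
      apply Subtype.ext
      push_cast [hpS_def]
      rfl
    set J : Ideal ℤ := M.comap (algebraMap ℤ A) with hJ_def
    haveI hJp : J.IsPrime := Ideal.IsPrime.comap _
    have hqJ : q ∈ J := by rwa [hJ_def, Ideal.mem_comap, hqe]
    have hpJ : ((p : ℕ) : ℤ) ∈ J := by rwa [hJ_def, Ideal.mem_comap, hpe]
    have hmax : (Ideal.span {q}).IsMaximal :=
      PrincipalIdealRing.isMaximal_of_irreducible hq.irreducible
    have hJeq : Ideal.span {q} = J :=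
      (hmax.eq_of_le hJp.ne_top (Ideal.span_le.mpr (by simpa using hqJ)))
    rw [← hJeq, Ideal.mem_span_singleton] at hpJ
    exact hqp hpJ
  -- extend to a valuation subring
  set L : LocalSubring ℚ⟮b⟯ := LocalSubring.ofPrime A M with hL_def
  obtain ⟨V, hle, hloc⟩ := LocalSubring.exists_le_valuationSubring L
  have hALle : A ≤ L.toSubring := LocalSubring.le_ofPrime A M
  have hmapeq : ∀ x : A, algebraMap A L.toSubring x = Subring.inclusion hALle x :=
    fun _ => rfl
  -- valuation of p is 1
  have hpL : ((p : ℕ) : ℚ⟮b⟯) ∈ L.toSubring := hALle hpA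
  have hpV : ((p : ℕ) : ℚ⟮b⟯) ∈ V := hle hpL
  have hvp : V.valuation ((p : ℕ) : ℚ⟮b⟯) = 1 := by
    apply (V.valuation_eq_one_iff ⟨_, hpV⟩).mp
    have hunitL : IsUnit (Subring.inclusion hALle pS) := by
      rw [← hmapeq]
      exact (IsLocalization.AtPrime.isUnit_to_map_iff L.toSubring M pS).mpr hpM
    have hunitV := hunitL.map (Subring.inclusion hle)
    exact hunitV
  -- valuation of u is < 1
  have huL : u ∈ L.toSubring := hALle huA
  have hvu : V.valuation u < 1 := by
    have huV : u ∈ V := hle huL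
    refine lt_of_le_of_ne ((V.valuation_le_one_iff u).mpr huV) ?_
    intro he
    have h1 : IsUnit (⟨u, huV⟩ : V) := (V.valuation_eq_one_iff ⟨u, huV⟩).mpr he
    have h2 : IsUnit (Subring.inclusion hle (⟨u, huL⟩ : L.toSubring)) := by
      exact h1
    have h3 : IsUnit (⟨u, huL⟩ : L.toSubring) := hloc.1 _ h2
    have h4 : IsUnit (algebraMap A L.toSubring uS) := by
      rw [hmapeq]
      exact h3
    exact (IsLocalization.AtPrime.isUnit_to_map_iff L.toSubring M uS).mp h4 huM
  have hvg : 1 < V.valuation g := by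
    by_contra hle1
    push_neg at hle1
    have h1 : V.valuation g * V.valuation u = 1 := by
      rw [← map_mul, hu_def, mul_inv_cancel₀ hg0, map_one]
    have h2 := mul_le_mul_left hle1 (V.valuation u)
    rw [h1, one_mul] at h2
    exact absurd (lt_of_le_of_lt h2 hvu) (lt_irrefl _)
  exact aux_toAdd V _ g hvp hvg
end

section
/- Let J be the ideal (2, l) of ℤ[l], viewed as a ℤ[l]-module. Then J is not a projective ℤ[l]-module. -/
open Polynomial

noncomputable def f4 : Polynomial ℤ →+* ZMod 4 :=
  (Int.castRingHom (ZMod 4)).comp (Polynomial.evalRingHom 0)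

/-- The ideal `J = (2, l)` of `ℤ[l]`, viewed as a `ℤ[l]`-module, is not
projective. -/
theorem stmt14 :
    ¬ Module.Projective (Polynomial ℤ)
      (Ideal.span ({2, X} : Set (Polynomial ℤ))) := by
  intro hproj
  set J : Ideal (Polynomial ℤ) := Ideal.span ({2, X} : Set (Polynomial ℤ)) with hJ
  obtain ⟨s, hs⟩ := (Module.projective_def).mp hproj
  have h2J : (2 : Polynomial ℤ) ∈ J := Ideal.subset_span (by simp)
  have hXJ : (X : Polynomial ℤ) ∈ J := Ideal.subset_span (by simp)
  set a : J →₀ Polynomial ℤ := s ⟨2, h2J⟩ with ha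
  set b : J →₀ Polynomial ℤ := s ⟨X, hXJ⟩ with hb
  have hrel : (X : Polynomial ℤ) • a = (2 : Polynomial ℤ) • b := by
    rw [ha, hb, ← map_smul, ← map_smul]
    congr 1
    ext
    simp [mul_comm]
  have hdvd : ∀ i : J, (2 : Polynomial ℤ) ∣ a i := by
    intro i
    have h : X * a i = 2 * b i := by
      have := congrArg (fun g => g i) hrel
      simpa [smul_eq_mul] using this
    have : (C (2:ℤ)) ∣ a i := by
      rw [Polynomial.C_dvd_iff_dvd_coeff]
      intro n
      have hc : (X * a i).coeff (n+1) = (2 * b i).coeff (n+1) := by rw [h]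
      rw [Polynomial.coeff_X_mul] at hc
      rw [hc]
      have h2 : (2 * b i).coeff (n+1) = 2 * (b i).coeff (n+1) := by
        rw [show ((2 : Polynomial ℤ)) = C 2 by norm_num, Polynomial.coeff_C_mul]
      rw [h2]
      exact Dvd.intro _ rfl
    simpa using this
  have hJ2 : ∀ i : J, (2 : ZMod 4) ∣ f4 (i : Polynomial ℤ) := by
    intro i
    have hi : (i : Polynomial ℤ) ∈ Ideal.span ({2, X} : Set (Polynomial ℤ)) := i.2
    rw [Ideal.mem_span_pair] at hi
    obtain ⟨p, q, hpq⟩ := hi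
    refine ⟨f4 p, ?_⟩
    rw [← hpq]
    have hX : f4 X = 0 := by simp [f4]
    have h2 : f4 2 = 2 := by simp [f4]
    rw [map_add, map_mul, map_mul, hX, h2, mul_zero, add_zero, mul_comm]
  -- the identity 2 = ∑ a i * i
  have htot : (a.sum fun i c => c * (i : Polynomial ℤ)) = 2 := by
    have h := congrArg (Subtype.val) (hs ⟨2, h2J⟩)
    rw [Finsupp.linearCombination_apply] at h
    rw [← ha] at h
    rw [show ((⟨2, h2J⟩ : J) : Polynomial ℤ) = 2 from rfl] at h
    rw [← h]
    simp [Finsupp.sum, smul_eq_mul, AddSubmonoidClass.coe_finset_sum]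
  have hzero : f4 (a.sum fun i c => c * (i : Polynomial ℤ)) = 0 := by
    rw [map_finsuppSum, Finsupp.sum]
    apply Finset.sum_eq_zero
    intro i _
    obtain ⟨c, hc⟩ := hdvd i
    obtain ⟨d, hd⟩ := hJ2 i
    rw [map_mul, hc, map_mul, hd]
    have : f4 2 = 2 := by simp [f4]
    rw [this]
    ring_nf
    rw [show ((4:ZMod 4)) = 0 by decide]
    ring
  rw [htot] at hzero
  have : f4 2 = 2 := by simp [f4]
  rw [this] at hzero
  exact absurd hzero (by decide)
end

section
/- There is no pair of triples (p₁,q₁), (p₂,q₂), (p₃,q₃) ∈ ℤ[l] × ℤ[l] satisfying 2p₁ + lq₁ = 0, 2p₂ + lq₂ = −2, 2p₃ + lq₃ = l, and 2p₃ + lp₂ = (6+l)p₁. -/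
open Polynomial

/-- There are no polynomials `p₁,q₁,p₂,q₂,p₃,q₃ ∈ ℤ[l]` with
`2p₁ + lq₁ = 0`, `2p₂ + lq₂ = −2`, `2p₃ + lq₃ = l` and `2p₃ + lp₂ = (6+l)p₁`. -/
theorem stmt16 :
    ¬ ∃ p₁ q₁ p₂ q₂ p₃ q₃ : Polynomial ℤ,
      2 * p₁ + X * q₁ = 0 ∧
      2 * p₂ + X * q₂ = -2 ∧
      2 * p₃ + X * q₃ = X ∧
      2 * p₃ + X * p₂ = (6 + X) * p₁ := by
  rintro ⟨p₁, q₁, p₂, q₂, p₃, q₃, h1, h2, h3, h4⟩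
  have key : X * (p₂ - p₁) = 2 * (3 * p₁ - p₃) := by linear_combination h4
  have c1 := congrArg (fun p : Polynomial ℤ => p.coeff 0) h1
  have c2 := congrArg (fun p : Polynomial ℤ => p.coeff 0) h2
  have ck := congrArg (fun p : Polynomial ℤ => p.coeff 1) key
  simp only [coeff_add, coeff_mul_X, coeff_X_mul, mul_coeff_zero, coeff_ofNat_zero,
    coeff_X_zero, coeff_zero, coeff_neg, coeff_sub] at c1 c2 ck
  rw [show ((2 : Polynomial ℤ) * (3 * p₁ - p₃)).coeff 1 = 2 * (3 * p₁ - p₃).coeff 1 by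
      simp [coeff_ofNat_mul]] at ck
  simp only [zero_mul, add_zero] at c1 c2
  omega
end

section
/- Let k be a field, R = k[x₀, x₁, …, x_n] with the lexicographic monomial order generated by x_i < x_j iff i < j, let I ⊆ R be an ideal with Groebner basis G = {g₁, …, g_r} whose leading monomials all lie in k[x₁, …, x_n]. Suppose n₁ < ⋯ < n_k are monomials in k[x₁, …, x_n] such that the images of n₁, …, n_{k−1} generate a free k[x₀]-submodule of R/I of rank k−1, and n_k is not divisible by any leading monomial of G. Then the images of n₁, …, n_k generate a free k[x₀]-submodule of R/I of rank k. -/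
open MvPolynomial Finsupp

/-- The leading monomial (exponent vector) of a multivariate polynomial with
respect to a monomial order, i.e. the `m`-largest exponent appearing in `f`. -/
noncomputable def leadMonomial {σ k : Type*} [CommSemiring k]
    (m : MonomialOrder σ) (f : MvPolynomial σ k) : σ →₀ ℕ :=
  m.toSyn.symm (f.support.sup m.toSyn)

/-- `G` is a Groebner basis of the ideal `I` with respect to the monomial order
`m`: `G ⊆ I` and the leading monomial of every nonzero element of `I` is
divisible by the leading monomial of some element of `G`.  (Divisibility of
monomials is the pointwise order on exponent vectors.) -/
def IsGroebnerBasis {σ k : Type*} [Field k] (m : MonomialOrder σ)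
    (I : Ideal (MvPolynomial σ k)) (G : Finset (MvPolynomial σ k)) : Prop :=
  (↑G : Set (MvPolynomial σ k)) ⊆ (I : Set (MvPolynomial σ k)) ∧
    ∀ f ∈ I, f ≠ 0 → ∃ g ∈ G, leadMonomial m g ≤ leadMonomial m f

/-- The lexicographic monomial order on `k[x₀, …, x_n]` generated by `xᵢ < xⱼ`
iff `i < j`: the lexicographic order in which variables of *larger* index are
more significant, realized as `MonomialOrder.lex` on the order-dual of
`Fin (n+1)`. -/
noncomputable def lexMonomialOrder (n : ℕ) : MonomialOrder ((Fin (n + 1))ᵒᵈ) :=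
  @MonomialOrder.lex _ _ Finite.to_wellFoundedGT

/-- Expansion of `aeval (X t) p * monomial ν 1` as a sum of monomials. -/
lemma aux_expand {σ R : Type*} [CommSemiring R] (t : σ) (p : Polynomial R) (ν : σ →₀ ℕ) :
    (Polynomial.aeval (X t : MvPolynomial σ R) p) * monomial ν 1 =
      ∑ m ∈ p.support, monomial (Finsupp.single t m + ν) (p.coeff m) := by
  rw [Polynomial.aeval_def, Polynomial.eval₂_eq_sum, Polynomial.sum_def, Finset.sum_mul]
  refine Finset.sum_congr rfl fun m _ => ?_
  rw [MvPolynomial.X_pow_eq_monomial,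
    show (algebraMap R (MvPolynomial σ R)) (p.coeff m) = C (p.coeff m) from rfl,
    MvPolynomial.C_mul_monomial, MvPolynomial.monomial_mul]
  simp

/-- Let `R = k[x₀, x₁, …, x_n]` with the lexicographic monomial order generated
by `xᵢ < xⱼ` iff `i < j`, and let `I ⊆ R` be an ideal with Groebner basis `G`
whose leading monomials do not involve `x₀`.  Suppose `N 0 < ⋯ < N K` (in the
monomial order) are monomials not involving `x₀` such that the images in `R/I`
of the first `K` of them are linearly independent over `k[x₀]` (i.e. generate a
free `k[x₀]`-submodule of rank `K`), and the last is divisible by no leading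
monomial of `G`.  Then the images of all `K+1` of them are linearly independent
over `k[x₀]` (i.e. generate a free `k[x₀]`-submodule of rank `K+1`). -/
theorem stmt18 {k : Type*} [Field k] (n : ℕ) (K : ℕ)
    (I : Ideal (MvPolynomial ((Fin (n + 1))ᵒᵈ) k))
    (G : Finset (MvPolynomial ((Fin (n + 1))ᵒᵈ) k))
    (hG : IsGroebnerBasis (lexMonomialOrder n) I G)
    (hLM : ∀ g ∈ G, leadMonomial (lexMonomialOrder n) g (OrderDual.toDual 0) = 0)
    (N : Fin (K + 1) → ((Fin (n + 1))ᵒᵈ →₀ ℕ))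
    (hN0 : ∀ j, N j (OrderDual.toDual 0) = 0)
    (hmono : ∀ i j : Fin (K + 1), i < j →
      (lexMonomialOrder n).toSyn (N i) < (lexMonomialOrder n).toSyn (N j))
    (hfree : ∀ c : Fin K → Polynomial k,
      Ideal.Quotient.mk I (∑ j : Fin K,
        Polynomial.aeval (X (OrderDual.toDual 0)) (c j) *
          monomial (N j.castSucc) 1) = 0 → ∀ j, c j = 0)
    (hndvd : ∀ g ∈ G, ¬ leadMonomial (lexMonomialOrder n) g ≤ N (Fin.last K)) :
    ∀ c : Fin (K + 1) → Polynomial k,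
      Ideal.Quotient.mk I (∑ j : Fin (K + 1),
        Polynomial.aeval (X (OrderDual.toDual 0)) (c j) *
          monomial (N j) 1) = 0 → ∀ j, c j = 0 := by
  intro c hc
  set t : (Fin (n + 1))ᵒᵈ := OrderDual.toDual 0 with ht
  set M := lexMonomialOrder n with hM
  -- t is the top element of σ
  have htop : ∀ x : (Fin (n + 1))ᵒᵈ, x ≤ t := fun x =>
    OrderDual.le_toDual.mpr (Fin.zero_le _)
  -- injectivity of N
  have hNinj : Function.Injective N := by
    intro i j h
    by_contra hne
    rcases Ne.lt_or_gt hne with h1 | h1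
    · exact absurd (hmono i j h1) (by rw [h]; exact lt_irrefl _)
    · exact absurd (hmono j i h1) (by rw [h]; exact lt_irrefl _)
  -- key injectivity of (m, j) ↦ single t m + N j
  have hkey : ∀ (m a : ℕ) (j j0 : Fin (K + 1)),
      Finsupp.single t m + N j = Finsupp.single t a + N j0 → m = a ∧ j = j0 := by
    intro m a j j0 h
    have hNeq : N j = N j0 := by
      ext x
      rcases eq_or_ne x t with rfl | hx
      · rw [hN0, hN0]
      · have hx' := DFunLike.congr_fun h x
        simpa [Finsupp.add_apply, Finsupp.single_eq_of_ne' (Ne.symm hx)] using hx'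
    refine ⟨?_, hNinj hNeq⟩
    have h' := DFunLike.congr_fun h t
    simpa [Finsupp.add_apply, Finsupp.single_eq_same, hN0] using h'
  -- lex comparison lemmas
  have L1b : ∀ (μ : (Fin (n + 1))ᵒᵈ →₀ ℕ), μ t = 0 → ∀ a a' : ℕ, a < a' →
      M.toSyn (Finsupp.single t a + μ) < M.toSyn (Finsupp.single t a' + μ) := by
    intro μ hμ a a' haa
    show toLex (Finsupp.single t a + μ) < toLex (Finsupp.single t a' + μ)
    rw [Finsupp.Lex.lt_iff]
    refine ⟨t, fun j hj => ?_, ?_⟩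
    · have hjt : j ≠ t := ne_of_lt hj
      simp [Finsupp.add_apply, Finsupp.single_eq_of_ne' (Ne.symm hjt)]
    · simpa [Finsupp.add_apply, Finsupp.single_eq_same, hμ] using haa
  have L1a : ∀ (μ μ' : (Fin (n + 1))ᵒᵈ →₀ ℕ), μ t = 0 → μ' t = 0 →
      M.toSyn μ < M.toSyn μ' → ∀ a a' : ℕ,
      M.toSyn (Finsupp.single t a + μ) < M.toSyn (Finsupp.single t a' + μ') := by
    intro μ μ' hμ hμ' hlt a a'
    have h' : toLex μ < toLex μ' := hlt
    rw [Finsupp.Lex.lt_iff] at h'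
    obtain ⟨i, hji, hi⟩ := h'
    simp only [ofLex_toLex] at hji hi
    have hit : i ≠ t := by
      intro h; rw [h, hμ, hμ'] at hi; exact lt_irrefl 0 hi
    show toLex (Finsupp.single t a + μ) < toLex (Finsupp.single t a' + μ')
    rw [Finsupp.Lex.lt_iff]
    refine ⟨i, fun j hj => ?_, ?_⟩
    · have hjt : j ≠ t := ne_of_lt (lt_of_lt_of_le hj (htop i))
      simp only [ofLex_toLex, Finsupp.add_apply,
        Finsupp.single_eq_of_ne' (Ne.symm hjt), zero_add]
      exact hji j hj
    · simp only [ofLex_toLex, Finsupp.add_apply,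
        Finsupp.single_eq_of_ne' (Ne.symm hit), zero_add]
      exact hi
  set f : MvPolynomial ((Fin (n + 1))ᵒᵈ) k :=
    ∑ j : Fin (K + 1), Polynomial.aeval (X t) (c j) * monomial (N j) 1 with hfdef
  -- the coefficients of f
  have coeff_F : ∀ (a : ℕ) (j0 : Fin (K + 1)),
      MvPolynomial.coeff (Finsupp.single t a + N j0) f = (c j0).coeff a := by
    intro a j0
    rw [hfdef]
    simp only [aux_expand, MvPolynomial.coeff_sum, MvPolynomial.coeff_monomial]
    rw [Finset.sum_eq_single_of_mem j0 (Finset.mem_univ _)]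
    · have hcond : ∀ m : ℕ,
          (Finsupp.single t m + N j0 = Finsupp.single t a + N j0) ↔ m = a :=
        fun m => ⟨fun h => (hkey m a j0 j0 h).1, fun h => by rw [h]⟩
      simp only [hcond]
      rw [Finset.sum_ite_eq' (c j0).support a fun m => (c j0).coeff m]
      split_ifs with h
      · rfl
      · exact (Polynomial.notMem_support_iff.mp h).symm
    · intro b _ hb
      refine Finset.sum_eq_zero fun m _ => ?_
      exact if_neg fun h => hb (hkey m a b j0 h).2
  -- support of f
  have hsupp : ∀ d ∈ f.support, ∃ j : Fin (K + 1), ∃ m ∈ (c j).support,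
      d = Finsupp.single t m + N j := by
    intro d hd
    rw [hfdef] at hd
    simp only [aux_expand] at hd
    obtain ⟨j, -, hj⟩ := Finset.mem_biUnion.mp (MvPolynomial.support_sum hd)
    obtain ⟨m, hm, hmm⟩ := Finset.mem_biUnion.mp (MvPolynomial.support_sum hj)
    refine ⟨j, m, hm, ?_⟩
    rw [MvPolynomial.mem_support_iff, MvPolynomial.coeff_monomial] at hmm
    by_cases h : Finsupp.single t m + N j = d
    · exact h.symm
    · rw [if_neg h] at hmm; exact absurd rfl hmm
  by_cases hcK : c (Fin.last K) = 0
  · -- reduce to hfree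
    have hsum : f = ∑ j : Fin K,
        Polynomial.aeval (X t) (c j.castSucc) * monomial (N j.castSucc) (1 : k) := by
      rw [hfdef, Fin.sum_univ_castSucc]
      simp [hcK]
    have hall := hfree (fun i => c i.castSucc) (by rw [← hsum]; exact hc)
    intro j
    induction j using Fin.lastCases with
    | last => exact hcK
    | cast i => exact hall i
  · exfalso
    set D := (c (Fin.last K)).natDegree with hD
    have hDne : (c (Fin.last K)).coeff D ≠ 0 := by
      have := Polynomial.leadingCoeff_ne_zero.mpr hcK
      rwa [Polynomial.leadingCoeff] at this
    have hmem : Finsupp.single t D + N (Fin.last K) ∈ f.support := by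
      rw [MvPolynomial.mem_support_iff, coeff_F]; exact hDne
    have hfne : f ≠ 0 := fun h => by simp [h] at hmem
    have hfI : f ∈ I := Ideal.Quotient.eq_zero_iff_mem.mp hc
    have hsup : f.support.sup M.toSyn
        = M.toSyn (Finsupp.single t D + N (Fin.last K)) := by
      apply le_antisymm
      · apply Finset.sup_le
        intro d hd
        obtain ⟨j, m, hm, rfl⟩ := hsupp d hd
        rcases eq_or_ne j (Fin.last K) with rfl | hj
        · rcases eq_or_ne m D with rfl | hmD
          · exact le_refl _
          · exact (L1b _ (hN0 _) m D
              (lt_of_le_of_ne (Polynomial.le_natDegree_of_mem_supp m hm) hmD)).le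
        · exact (L1a _ _ (hN0 _) (hN0 _)
            (hmono j (Fin.last K) (lt_of_le_of_ne (Fin.le_last j) hj)) m D).le
      · exact Finset.le_sup hmem
    have hleadf : leadMonomial M f = Finsupp.single t D + N (Fin.last K) := by
      rw [leadMonomial, hsup]; exact M.toSyn.symm_apply_apply _
    obtain ⟨g, hg, hle⟩ := hG.2 f hfI hfne
    rw [hleadf] at hle
    refine hndvd g hg ?_
    rw [Finsupp.le_def] at hle ⊢
    intro x
    rcases eq_or_ne x t with rfl | hx
    · rw [hLM g hg]; exact Nat.zero_le _
    · have hx' := hle x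
      rwa [Finsupp.add_apply, Finsupp.single_eq_of_ne' (Ne.symm hx), zero_add] at hx'
end
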